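/- arXiv:2202.13439 — 5 statements merged into one kernel-verified Lean document; each statement's English description precedes it below -/
import Mathlib

section
/- Let G and H be abelian Polish groups, M a Polishable subgroup of H, and ψ : G → H/M a group homomorphism into the quotient group. Suppose C ⊆ G is a dense G_δ subset and f : C → H is a Borel function such that f(x) + M = ψ(x) for every x ∈ C. Then f extends to a Borel function g : G → H such that g(x) + M = ψ(x) for every x ∈ G; in particular ψ admits a global Borel lift. -/
/-!
Every `x ∈ G` is a difference `a - b` of points of `C`, since `C ∩ (x + C)` is comeagre by the
Baire category theorem. The pair `(a, b)` can be chosen Borel in `x`: descend through nested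
dyadic balls of `G × G` that meet the fibre of subtraction over `x` and shrink into the open sets
whose intersection is `C × C`, always taking the ball of least index. Subtraction is an open map,
so each choice depends on `x` through open sets only, and the centres of the balls converge to the
required pair. Off `C` put `g x = f a - f b`; then `g x + M = ψ a - ψ b = ψ x`.
-/

/-- A subgroup `N` of an abelian Polish group `G` is *Polishable* if it carries a Polish group
topology whose open sets are Borel in `G`. -/
def IsPolishableSubgroup {G : Type*} [TopologicalSpace G] [MeasurableSpace G]
    [AddCommGroup G] (N : AddSubgroup G) : Prop :=
  ∃ τ : TopologicalSpace N, @PolishSpace N τ ∧ @IsTopologicalAddGroup N τ _ ∧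
    ∀ U : Set N, τ.IsOpen U → MeasurableSet (Subtype.val '' U)

open Set Metric Filter Topology

lemma Measurable.measurableSet_setOf_apply {Y : Type*} [MeasurableSpace Y] {g : Y → ℕ}
    (hg : Measurable g) {Q : Y → ℕ → Prop} (hQ : ∀ s, MeasurableSet {y | Q y s}) :
    MeasurableSet {y | Q y (g y)} := by
  have : {y | Q y (g y)} = ⋃ s, g ⁻¹' {s} ∩ {y | Q y s} := by ext; simp
  rw [this]
  exact .iUnion fun s => (hg (measurableSet_singleton s)).inter (hQ s)

noncomputable def dyadicRadius (s : ℕ) : ℝ := (1 / 2) ^ s.unpair.2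

lemma dyadicRadius_pos (s : ℕ) : 0 < dyadicRadius s := by
  unfold dyadicRadius; positivity

lemma dyadicRadius_le_one (s : ℕ) : dyadicRadius s ≤ 1 :=
  pow_le_one₀ (by norm_num) (by norm_num)

section DyadicBalls

variable {X : Type*} [MetricSpace X] (u : ℕ → X)

def dyadicCenter (s : ℕ) : X := u s.unpair.1

def dyadicBall (s : ℕ) : Set X := ball (dyadicCenter u s) (dyadicRadius s)

def dyadicClosedBall (s : ℕ) : Set X := closedBall (dyadicCenter u s) (dyadicRadius s)

variable {u}

lemma dyadicCenter_mem_dyadicClosedBall (s : ℕ) : dyadicCenter u s ∈ dyadicClosedBall u s :=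
  mem_closedBall_self (dyadicRadius_pos s).le

lemma DenseRange.exists_dyadicClosedBall_subset (hu : DenseRange u) {O : Set X} (hO : IsOpen O)
    {x : X} (hx : x ∈ O) {ε : ℝ} (hε : 0 < ε) :
    ∃ s, x ∈ dyadicBall u s ∧ dyadicClosedBall u s ⊆ O ∧ dyadicRadius s ≤ ε := by
  obtain ⟨ρ, hρ, hρO⟩ := Metric.isOpen_iff.1 hO x hx
  obtain ⟨m, hm⟩ :=
    exists_pow_lt_of_lt_one (lt_min (half_pos hρ) hε) (by norm_num : (1 / 2 : ℝ) < 1)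
  have hmρ : (1 / 2 : ℝ) ^ m ≤ ρ / 2 := hm.le.trans (min_le_left _ _)
  obtain ⟨j, hj⟩ := hu.exists_dist_lt x (pow_pos (by norm_num : (0 : ℝ) < 1 / 2) m)
  have hs : dyadicCenter u (Nat.pair j m) = u j ∧ dyadicRadius (Nat.pair j m) = (1 / 2) ^ m := by
    simp [dyadicCenter, dyadicRadius]
  refine ⟨Nat.pair j m, ?_, fun w hw => hρO ?_, ?_⟩
  · rw [dyadicBall, hs.1, hs.2, mem_ball]
    exact hj
  · rw [dyadicClosedBall, hs.1, hs.2, mem_closedBall] at hw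
    calc dist w x ≤ dist w (u j) + dist x (u j) := dist_triangle_right _ _ _
      _ < ρ / 2 + ρ / 2 := add_lt_add_of_le_of_lt (hw.trans hmρ) (hj.trans_le hmρ)
      _ = ρ := add_halves ρ
  · exact hs.2 ▸ hm.le.trans (min_le_right _ _)

end DyadicBalls

section BallSequence

open scoped Classical

variable {X Y : Type*} [MetricSpace X] (u : ℕ → X) (p : X → Y) (W : ℕ → Set X)

/-- Stated as an implication so that a suitable `t` always exists and `Nat.find` can pick the
least one, measurably in `y`. -/
def IsNextBall (y : Y) (n s t : ℕ) : Prop :=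
  y ∈ p '' dyadicBall u s → y ∈ p '' dyadicBall u t ∧
    dyadicClosedBall u t ⊆ dyadicBall u s ∩ W n ∧ dyadicRadius t ≤ (1 / 2) ^ (n + 1)

variable {u p W}

lemma exists_isNextBall (hu : DenseRange u) (hWo : ∀ n, IsOpen (W n))
    (hWp : ∀ n U, IsOpen U → p '' U ⊆ p '' (U ∩ W n)) (y : Y) (n s : ℕ) :
    ∃ t, IsNextBall u p W y n s t := by
  by_cases hy : y ∈ p '' dyadicBall u s
  · obtain ⟨x, ⟨hxB, hxW⟩, rfl⟩ := hWp n _ isOpen_ball hy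
    obtain ⟨t, hxt, hts, htr⟩ := hu.exists_dyadicClosedBall_subset (isOpen_ball.inter (hWo n))
      ⟨hxB, hxW⟩ (ε := (1 / 2) ^ (n + 1)) (by positivity)
    exact ⟨t, fun _ => ⟨mem_image_of_mem p hxt, hts, htr⟩⟩
  · exact ⟨0, fun h => absurd h hy⟩

variable (u p W) in
noncomputable def ballIndex (h0 : ∀ y, ∃ s, y ∈ p '' dyadicBall u s)
    (hnext : ∀ y n s, ∃ t, IsNextBall u p W y n s t) : ℕ → Y → ℕ
  | 0, y => Nat.find (h0 y)
  | n + 1, y => Nat.find (hnext y n (ballIndex h0 hnext n y))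

variable {h0 : ∀ y, ∃ s, y ∈ p '' dyadicBall u s}
  {hnext : ∀ y n s, ∃ t, IsNextBall u p W y n s t}

lemma mem_image_dyadicBall_ballIndex (n : ℕ) (y : Y) :
    y ∈ p '' dyadicBall u (ballIndex u p W h0 hnext n y) := by
  induction n with
  | zero => exact Nat.find_spec (h0 y)
  | succ n ih => exact (Nat.find_spec (hnext y n _) ih).1

lemma ballIndex_succ_spec (n : ℕ) (y : Y) :
    dyadicClosedBall u (ballIndex u p W h0 hnext (n + 1) y) ⊆
      dyadicBall u (ballIndex u p W h0 hnext n y) ∩ W n ∧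
    dyadicRadius (ballIndex u p W h0 hnext (n + 1) y) ≤ (1 / 2) ^ (n + 1) :=
  (Nat.find_spec (hnext y n _) (mem_image_dyadicBall_ballIndex n y)).2

lemma dyadicRadius_ballIndex_le (n : ℕ) (y : Y) :
    dyadicRadius (ballIndex u p W h0 hnext n y) ≤ (1 / 2) ^ n := by
  cases n with
  | zero => simpa using dyadicRadius_le_one _
  | succ n => exact (ballIndex_succ_spec n y).2

lemma antitone_dyadicClosedBall_ballIndex (y : Y) :
    Antitone fun n => dyadicClosedBall u (ballIndex u p W h0 hnext n y) :=
  antitone_nat_of_succ_le fun n =>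
    ((ballIndex_succ_spec n y).1.trans inter_subset_left).trans ball_subset_closedBall

lemma cauchySeq_dyadicCenter_ballIndex (y : Y) :
    CauchySeq fun n => dyadicCenter u (ballIndex u p W h0 hnext n y) := by
  refine cauchySeq_of_le_geometric (1 / 2 : ℝ) 1 (by norm_num) fun n => ?_
  have hmem := (ballIndex_succ_spec (h0 := h0) (hnext := hnext) n y).1
    (dyadicCenter_mem_dyadicClosedBall _)
  rw [one_mul, dist_comm]
  exact (mem_ball.1 hmem.1).le.trans (dyadicRadius_ballIndex_le n y)

variable [MeasurableSpace Y]

lemma measurable_ballIndex (hpB : ∀ s, MeasurableSet (p '' dyadicBall u s)) (n : ℕ) :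
    Measurable (ballIndex u p W h0 hnext n) := by
  induction n with
  | zero => exact measurable_find h0 hpB
  | succ n ih =>
    exact measurable_find _ fun t => ih.measurableSet_setOf_apply
      (Q := fun y s => IsNextBall u p W y n s t) fun s => (hpB s).imp ((hpB t).inter (.const _))

end BallSequence

section BallSequenceLimit

variable {X Y : Type*} [MetricSpace X] {u : ℕ → X} {p : X → Y} {W : ℕ → Set X}
  {h0 : ∀ y, ∃ s, y ∈ p '' dyadicBall u s}
  {hnext : ∀ y n s, ∃ t, IsNextBall u p W y n s t} {y : Y} {x : X}

lemma mem_dyadicClosedBall_ballIndex_of_tendsto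
    (hx : Tendsto (fun n => dyadicCenter u (ballIndex u p W h0 hnext n y)) atTop (𝓝 x))
    (n : ℕ) :
    x ∈ dyadicClosedBall u (ballIndex u p W h0 hnext n y) :=
  isClosed_closedBall.mem_of_tendsto hx <| eventually_atTop.2 ⟨n, fun _ hm =>
    antitone_dyadicClosedBall_ballIndex y hm (dyadicCenter_mem_dyadicClosedBall _)⟩

lemma mem_of_tendsto_dyadicCenter_ballIndex
    (hx : Tendsto (fun n => dyadicCenter u (ballIndex u p W h0 hnext n y)) atTop (𝓝 x))
    (n : ℕ) :
    x ∈ W n :=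
  ((ballIndex_succ_spec n y).1 (mem_dyadicClosedBall_ballIndex_of_tendsto hx (n + 1))).2

lemma apply_eq_of_tendsto_dyadicCenter_ballIndex [TopologicalSpace Y] [T1Space Y]
    (hp : Continuous p)
    (hx : Tendsto (fun n => dyadicCenter u (ballIndex u p W h0 hnext n y)) atTop (𝓝 x)) :
    p x = y := by
  suffices x ∈ closure (p ⁻¹' {y}) by rwa [(isClosed_singleton.preimage hp).closure_eq] at this
  refine Metric.mem_closure_iff.2 fun ε hε => ?_
  obtain ⟨n, hn⟩ := exists_pow_lt_of_lt_one (half_pos hε) (by norm_num : (1 / 2 : ℝ) < 1)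
  obtain ⟨w, hwB, hwy⟩ := mem_image_dyadicBall_ballIndex (h0 := h0) (hnext := hnext) n y
  have hxB := mem_closedBall.1 (mem_dyadicClosedBall_ballIndex_of_tendsto hx n)
  have hr := (dyadicRadius_ballIndex_le (h0 := h0) (hnext := hnext) n y).trans hn.le
  refine ⟨w, hwy, ?_⟩
  calc dist x w ≤ dist x _ + dist w _ := dist_triangle_right _ _ _
    _ < ε / 2 + ε / 2 := add_lt_add_of_le_of_lt (hxB.trans hr) ((mem_ball.1 hwB).trans_le hr)
    _ = ε := add_halves ε

end BallSequenceLimit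

theorem IsOpenMap.exists_measurable_section_mem {X Y : Type*} [TopologicalSpace X] [PolishSpace X]
    [Nonempty X] [MeasurableSpace X] [BorelSpace X] [TopologicalSpace Y] [T1Space Y]
    [MeasurableSpace Y] [OpensMeasurableSpace Y] {p : X → Y} (hpo : IsOpenMap p)
    (hpc : Continuous p) (hps : Function.Surjective p) {S : Set X} (hS : IsGδ S)
    (hSp : ∀ U, IsOpen U → p '' U ⊆ p '' (U ∩ S)) :
    ∃ z : Y → X, Measurable z ∧ ∀ y, z y ∈ S ∧ p (z y) = y := by
  let := TopologicalSpace.upgradeIsCompletelyMetrizable X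
  obtain ⟨u, hu⟩ := TopologicalSpace.exists_dense_seq X
  obtain ⟨W, hWo, rfl⟩ := hS.eq_iInter_nat
  have h0 : ∀ y, ∃ s, y ∈ p '' dyadicBall u s := fun y => by
    obtain ⟨x, rfl⟩ := hps y
    obtain ⟨s, hxs, -⟩ := hu.exists_dyadicClosedBall_subset isOpen_univ (mem_univ x) one_pos
    exact ⟨s, mem_image_of_mem p hxs⟩
  have hnext := exists_isNextBall hu hWo fun n U hU =>
    (hSp U hU).trans (image_mono (inter_subset_inter_right _ (iInter_subset W n)))
  have hpB : ∀ s, MeasurableSet (p '' dyadicBall u s) := fun s =>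
    (hpo _ isOpen_ball).measurableSet
  choose z hz using fun y =>
    cauchySeq_tendsto_of_complete (cauchySeq_dyadicCenter_ballIndex (h0 := h0) (hnext := hnext) y)
  refine ⟨z, measurable_of_tendsto_metrizable
    (f := fun n y => dyadicCenter u (ballIndex u p W h0 hnext n y))
    (fun n => (measurable_from_top (f := dyadicCenter u)).comp (measurable_ballIndex hpB n))
    (tendsto_pi_nhds.2 hz),
    fun y => ⟨mem_iInter.2 (mem_of_tendsto_dyadicCenter_ballIndex (hz y)),
      apply_eq_of_tendsto_dyadicCenter_ballIndex hpc (hz y)⟩⟩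

lemma IsGδ.prod {X Y : Type*} [TopologicalSpace X] [TopologicalSpace Y] {s : Set X} {t : Set Y}
    (hs : IsGδ s) (ht : IsGδ t) : IsGδ (s ×ˢ t) := by
  rw [Set.prod_eq]
  exact (hs.preimage continuous_fst).inter (ht.preimage continuous_snd)

section TopologicalAddGroup

variable {G : Type*} [TopologicalSpace G] [AddGroup G] [IsTopologicalAddGroup G]

lemma isOpenMap_fst_sub_snd : IsOpenMap fun q : G × G => q.1 - q.2 :=
  .of_sections fun q => ⟨fun y => (y + q.2, q.2), by fun_prop, by simp, fun y => by simp⟩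

lemma image_fst_sub_snd_subset_inter_prod [BaireSpace G] {C : Set G} (hCd : Dense C)
    (hCG : IsGδ C) {U : Set (G × G)} (hU : IsOpen U) :
    (fun q : G × G => q.1 - q.2) '' U ⊆ (fun q : G × G => q.1 - q.2) '' (U ∩ C ×ˢ C) := by
  rintro _ ⟨⟨a, b⟩, hab, rfl⟩
  have hfiber : Dense ((a - b + ·) ⁻¹' C ∩ C) :=
    Dense.inter_of_Gδ (hCG.preimage (continuous_const_add _)) hCG
      (hCd.preimage (isOpenMap_add_left _)) hCd
  obtain ⟨w, ⟨hwC', hwC⟩, hwU⟩ := hfiber.exists_mem_open (U := {w | (a - b + w, w) ∈ U})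
    (hU.preimage (by fun_prop)) ⟨b, by simpa using hab⟩
  exact ⟨(a - b + w, w), ⟨hwU, hwC', hwC⟩, by simp⟩

variable [PolishSpace G] [MeasurableSpace G] [BorelSpace G]

theorem Dense.exists_measurable_sub_eq {C : Set G} (hCd : Dense C) (hCG : IsGδ C) :
    ∃ z : G → G × G, Measurable z ∧ ∀ x, z x ∈ C ×ˢ C ∧ (z x).1 - (z x).2 = x :=
  isOpenMap_fst_sub_snd.exists_measurable_section_mem (by fun_prop)
    (fun x => ⟨(x, 0), sub_zero x⟩) (hCG.prod hCG)
    fun _ hU => image_fst_sub_snd_subset_inter_prod hCd hCG hU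

end TopologicalAddGroup

theorem statement0_general
    {G H : Type*}
    [TopologicalSpace G] [AddCommGroup G] [IsTopologicalAddGroup G] [PolishSpace G]
    [MeasurableSpace G] [BorelSpace G]
    [TopologicalSpace H] [AddCommGroup H] [IsTopologicalAddGroup H] [PolishSpace H]
    [MeasurableSpace H] [BorelSpace H]
    (M : AddSubgroup H)
    (ψ : G →+ H ⧸ M)
    (C : Set G) (hCdense : Dense C) (hCGδ : IsGδ C)
    (f : C → H) (hf : Measurable f)
    (hlift : ∀ x : C, (QuotientAddGroup.mk (f x) : H ⧸ M) = ψ x) :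
    ∃ g : G → H, Measurable g ∧ (∀ x : C, g x = f x) ∧
      ∀ x : G, (QuotientAddGroup.mk (g x) : H ⧸ M) = ψ x := by
  classical
  obtain ⟨z, hzm, hz⟩ := hCdense.exists_measurable_sub_eq hCGδ
  let z₁ : G → C := fun x => ⟨(z x).1, (hz x).1.1⟩
  let z₂ : G → C := fun x => ⟨(z x).2, (hz x).1.2⟩
  have hz₁ : Measurable z₁ := hzm.fst.subtype_mk
  have hz₂ : Measurable z₂ := hzm.snd.subtype_mk
  refine ⟨fun x => if h : x ∈ C then f ⟨x, h⟩ else f (z₁ x) - f (z₂ x),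
    .dite hf (((hf.comp hz₁).sub (hf.comp hz₂)).comp measurable_subtype_coe)
      hCGδ.measurableSet,
    fun x => dif_pos x.2, fun x => ?_⟩
  dsimp only
  split_ifs with h
  · exact hlift ⟨x, h⟩
  · rw [QuotientAddGroup.mk_sub, hlift, hlift, ← map_sub, (hz x).2]

/-- A partial Borel lift of a homomorphism into a quotient by a Polishable subgroup, defined on a
dense `Gδ` set, extends to a global Borel lift. -/
theorem statement0
    {G H : Type*}
    [TopologicalSpace G] [AddCommGroup G] [IsTopologicalAddGroup G] [PolishSpace G]
    [MeasurableSpace G] [BorelSpace G]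
    [TopologicalSpace H] [AddCommGroup H] [IsTopologicalAddGroup H] [PolishSpace H]
    [MeasurableSpace H] [BorelSpace H]
    (M : AddSubgroup H) (hM : IsPolishableSubgroup M)
    (ψ : G →+ H ⧸ M)
    (C : Set G) (hCdense : Dense C) (hCGδ : IsGδ C)
    (f : C → H) (hf : Measurable f)
    (hlift : ∀ x : C, (QuotientAddGroup.mk (f x) : H ⧸ M) = ψ x) :
    ∃ g : G → H, Measurable g ∧ (∀ x : C, g x = f x) ∧
      ∀ x : G, (QuotientAddGroup.mk (g x) : H ⧸ M) = ψ x :=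
  statement0_general M ψ C hCdense hCGδ f hf hlift
end

section
/- Let G be an abelian Polish group and let (Gₙ)_{n∈ω} be a sequence of Polishable subgroups of G. Then the intersection ⋂_{n∈ω} Gₙ is a Polishable subgroup of G. -/
/-!
Pettis' theorem makes every Borel homomorphism from a Polish group into a separable group
continuous. By Lusin–Souslin, the Polish topology of a Polishable subgroup makes its inclusion
into `G` Borel, hence continuous; conversely a continuous inclusion sends open sets to Borel
sets. For the intersection `N` of the `Gₙ`, the map `x ↦ (x, (x)ₙ)` embeds `N` onto a closed
subgroup of the Polish group `G × ∏ₙ Gₙ`, and the induced topology is the required one.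
-/

open Set Filter Topology Function Pointwise

/-- Pettis' theorem. -/
theorem BaireMeasurableSet.sub_mem_nhds_zero {H : Type*} [TopologicalSpace H] [AddGroup H]
    [IsTopologicalAddGroup H] [BaireSpace H] {A : Set H} (hA : BaireMeasurableSet A)
    (hA' : ¬IsMeagre A) : A - A ∈ 𝓝 (0 : H) := by
  obtain ⟨U, hU, hAU⟩ := hA.residualEq_isOpen
  have isMeagre_of_eq_empty {s t : Set H} (hst : s =ᵇ t) (hs : s = ∅) : IsMeagre t :=
    eventuallyEq_empty.1 (hs ▸ hst.symm)
  obtain ⟨u, hu⟩ : U.Nonempty :=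
    nonempty_iff_ne_empty.2 fun h => hA' (isMeagre_of_eq_empty hAU.symm h)
  have hUU : U - U ⊆ A - A := by
    rintro _ ⟨u₁, hu₁, u₂, hu₂, rfl⟩
    -- `t ⁻¹' A = (u₁ - u₂) + A`
    let t := Homeomorph.addLeft (-(u₁ - u₂))
    have hAU' : (A ∩ t ⁻¹' A : Set H) =ᵇ (U ∩ t ⁻¹' U : Set H) :=
      hAU.inter (hAU.comp_tendsto (tendsto_residual_of_isOpenMap t.continuous t.isOpenMap))
    obtain ⟨x, hxA, hxA'⟩ : (A ∩ t ⁻¹' A).Nonempty := by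
      refine nonempty_iff_ne_empty.2 fun h => not_isMeagre_of_isOpen
        (hU.inter (hU.preimage t.continuous)) ⟨u₁, hu₁, ?_⟩ (isMeagre_of_eq_empty hAU' h)
      simpa [t] using hu₂
    exact ⟨x, hxA, t x, hxA', by simp [t]⟩
  exact mem_of_superset ((hU.sub_left).mem_nhds ⟨u, hu, u, hu, sub_self u⟩) hUU

theorem AddMonoidHom.continuous_of_measurable_of_baireSpace {H G : Type*}
    [TopologicalSpace H] [AddGroup H] [IsTopologicalAddGroup H] [BaireSpace H]
    [MeasurableSpace H] [BorelSpace H]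
    [TopologicalSpace G] [AddGroup G] [IsTopologicalAddGroup G]
    [TopologicalSpace.SeparableSpace G] [MeasurableSpace G] [OpensMeasurableSpace G]
    (f : H →+ G) (hf : Measurable f) : Continuous f := by
  refine continuous_of_tendsto_nhds_zero f fun W hW => ?_
  obtain ⟨V, hV, hVW⟩ := exists_nhds_half_neg hW
  obtain ⟨V', hV'V, hV', hV'0⟩ := mem_nhds_iff.1 hV
  obtain ⟨u, hu⟩ := TopologicalSpace.exists_dense_seq G
  let A : ℕ → Set H := fun n => f ⁻¹' {y | y - u n ∈ V'}
  have hA : ∀ n, MeasurableSet (A n) := fun n =>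
    hf ((hV'.preimage (continuous_sub_right (u n))).measurableSet)
  have hcover : (⋃ n, A n) = univ := by
    refine eq_univ_of_forall fun x => mem_iUnion.2 ?_
    obtain ⟨_, hz, n, rfl⟩ := mem_closure_iff_nhds.1 (hu (f x)) {z | f x - z ∈ V'}
      ((hV'.preimage (continuous_sub_left (f x))).mem_nhds (by simpa using hV'0))
    exact ⟨n, hz⟩
  obtain ⟨n, hn⟩ : ∃ n, ¬IsMeagre (A n) := by
    by_contra! h
    exact not_isMeagre_of_isOpen isOpen_univ ⟨0, trivial⟩ (hcover ▸ isMeagre_iUnion h)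
  refine mem_map.2 <| mem_of_superset ((hA n).baireMeasurableSet.sub_mem_nhds_zero hn) ?_
  rintro _ ⟨a, ha, b, hb, rfl⟩
  simpa [map_sub] using hVW _ (hV'V ha) _ (hV'V hb)

theorem measurable_of_injective_of_measurableSet_image {X Y : Type*} [TopologicalSpace X]
    [PolishSpace X] [MeasurableSpace X] [BorelSpace X] [MeasurableSpace Y]
    [StandardBorelSpace Y]
    {f : X → Y} (hf : Injective f) (himage : ∀ U, IsOpen U → MeasurableSet (f '' U)) :
    Measurable f := by
  have hrange : MeasurableSet (range f) := image_univ (f := f) ▸ himage univ isOpen_univ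
  have := hrange.standardBorel
  have image_factorization : image (rangeFactorization f) = preimage (rangeSplitting f) :=
    image_eq_preimage_of_inverse (rightInverse_rangeSplitting hf) (leftInverse_rangeSplitting f)
  have image_splitting : image (rangeSplitting f) = preimage (rangeFactorization f) :=
    image_eq_preimage_of_inverse (leftInverse_rangeSplitting f) (rightInverse_rangeSplitting hf)
  have hsplit : Measurable (rangeSplitting f) := measurable_of_isOpen fun U hU => by
    rw [← image_factorization, ← preimage_image_eq (rangeFactorization f '' U)
      Subtype.val_injective, ← image_comp]
    exact measurable_subtype_coe (himage U hU)
  have hemb := hsplit.measurableEmbedding (rangeSplitting_injective f)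
  have hfact : Measurable (rangeFactorization f) := fun B hB =>
    image_splitting ▸ hemb.measurableSet_image.2 hB
  exact measurable_subtype_coe.comp hfact

theorem isPolishableSubgroup_iff_exists_continuous_subtype {G : Type*} [TopologicalSpace G]
    [AddCommGroup G] [IsTopologicalAddGroup G] [PolishSpace G] [MeasurableSpace G]
    [BorelSpace G] (N : AddSubgroup G) :
    IsPolishableSubgroup N ↔ ∃ τ : TopologicalSpace N, @PolishSpace N τ ∧
      @IsTopologicalAddGroup N τ _ ∧ Continuous[τ, _] (Subtype.val : N → G) := by
  refine exists_congr fun τ => and_congr_right fun _ => and_congr_right fun _ => ?_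
  let _ := τ
  let _ : MeasurableSpace N := borel N
  have : BorelSpace N := ⟨rfl⟩
  exact ⟨fun himage => N.subtype.continuous_of_measurable_of_baireSpace
      (measurable_of_injective_of_measurableSet_image Subtype.val_injective himage),
    fun hcont U hU => (show IsOpen U from hU).measurableSet.image_of_continuousOn_injOn
      hcont.continuousOn Subtype.val_injective.injOn⟩

theorem AddSubgroup.range_prod_pi_inclusion_iInf {G ι : Type*} [AddGroup G]
    (Gs : ι → AddSubgroup G) :
    range ((⨅ i, Gs i).subtype.prod (AddMonoidHom.pi fun i => inclusion (iInf_le Gs i))) =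
      {p | ∀ i, (p.2 i : G) = p.1} := by
  ext ⟨g, x⟩
  constructor
  · rintro ⟨y, hy⟩ i
    simp only [Prod.ext_iff] at hy
    rw [← hy.1, ← hy.2]
    rfl
  · intro (hx : ∀ i, (x i : G) = g)
    have hg : g ∈ ⨅ i, Gs i := AddSubgroup.mem_iInf.2 fun i => hx i ▸ (x i).2
    exact ⟨⟨g, hg⟩, Prod.ext rfl (funext fun i => Subtype.ext (hx i).symm)⟩

theorem AddSubgroup.exists_polishSpace_iInf {G ι : Type*} [TopologicalSpace G] [AddGroup G]
    [IsTopologicalAddGroup G] [PolishSpace G] [Countable ι] (Gs : ι → AddSubgroup G)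
    [∀ i, TopologicalSpace (Gs i)] [∀ i, PolishSpace (Gs i)]
    [∀ i, IsTopologicalAddGroup (Gs i)] (hGs : ∀ i, Continuous (Subtype.val : Gs i → G)) :
    ∃ τ : TopologicalSpace ↥(⨅ i, Gs i), @PolishSpace _ τ ∧
      @IsTopologicalAddGroup _ τ _ ∧
      Continuous[τ, _] (Subtype.val : ↥(⨅ i, Gs i) → G) := by
  let Φ := (⨅ i, Gs i).subtype.prod (AddMonoidHom.pi fun i => inclusion (iInf_le Gs i))
  let _ := TopologicalSpace.induced Φ inferInstance
  have hΦ : IsClosedEmbedding Φ := by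
    refine ⟨⟨⟨rfl⟩, fun x y h => Subtype.ext (congrArg Prod.fst h)⟩, ?_⟩
    rw [range_prod_pi_inclusion_iInf, ofPred_forall]
    exact isClosed_iInter fun i =>
      isClosed_eq ((hGs i).comp ((continuous_apply i).comp continuous_snd)) continuous_fst
  exact ⟨_, hΦ.polishSpace, topologicalAddGroup_induced Φ, continuous_fst.comp hΦ.continuous⟩

/-- The intersection of a sequence of Polishable subgroups of an abelian Polish group is
Polishable. -/
theorem statement2
    {G : Type*}
    [TopologicalSpace G] [AddCommGroup G] [IsTopologicalAddGroup G] [PolishSpace G]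
    [MeasurableSpace G] [BorelSpace G]
    (Gs : ℕ → AddSubgroup G) (hGs : ∀ n, IsPolishableSubgroup (Gs n)) :
    IsPolishableSubgroup (⨅ n, Gs n) := by
  simp only [isPolishableSubgroup_iff_exists_continuous_subtype] at hGs ⊢
  choose τ _ _ hcont using hGs
  exact AddSubgroup.exists_polishSpace_iInf Gs hcont
end

section
/- Let G be a non-Archimedean abelian Polish group, Ĥ an abelian Polish group, M a non-Archimedean Polishable subgroup of Ĥ, and f : G → Ĥ a continuous function such that f(x+y) − f(x) − f(y) ∈ M for all x, y ∈ G. Let M₁ be an open subgroup of M (with respect to the Polish group topology of M) such that M₁ equals the intersection of M with the closure of M₁ in Ĥ. Then there exist x₁, y₁ ∈ G and an open subgroup G₁ of G such that the function g : G → Ĥ defined by g(z) := f(x₁ + y₁ + z) − f(x₁ + y₁) satisfies g(x+y) − g(x) − g(y) ∈ M₁ for all x, y ∈ G₁. -/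
/-!
The defect `w (x, y) = f (x + y) - f x - f y` takes values in `M`, and as `M₁` is open in the
separable group `M`, countably many cosets of `M₁` cover `M`. Since `G × G` is Baire, one fibre
`A = w⁻¹ (d + M₁)` is non-meagre; being Baire measurable, it is comeagre in some nonempty open set.
The Kuratowski–Ulam theorem then yields a corner `(x₁, y₁)` such that for generic small `(a, b)` the
four points `(x₁ + a, y₁ + b)`, `(x₁ + a, y₁)`, `(x₁, y₁ + b)`, `(x₁, y₁)` all lie in `A`. The
alternating sum of `w` over these points is the defect of `g` at `(a, b)`, so it lies in `M₁`.
By continuity the defect of `g` lies in the closure of `M₁` on a whole neighbourhood of `0`, and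
it lies in `M`; hence it lies in `M₁` there.
-/

open Set Filter Topology TopologicalSpace

section KuratowskiUlam

variable {X Y : Type*} [TopologicalSpace X] [TopologicalSpace Y] [SecondCountableTopology Y]

theorem Dense.eventually_residual_dense_section {t : Set (X × Y)} (hd : Dense t) (ht : IsOpen t) :
    ∀ᶠ x in residual X, Dense {y | (x, y) ∈ t} := by
  obtain ⟨B, hBc, hBne, hB⟩ := exists_countable_basis Y
  have hmeets : ∀ o ∈ B, ∀ᶠ x in residual X, ∃ y ∈ o, (x, y) ∈ t := fun o ho => by
    have hfst : {x | ∃ y ∈ o, (x, y) ∈ t} = Prod.fst '' (t ∩ univ ×ˢ o) := by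
      ext x; simp [and_comm]
    refine residual_of_dense_open ?_ ?_ <;> rw [hfst]
    · exact isOpenMap_fst _ (ht.inter (isOpen_univ.prod (hB.isOpen ho)))
    · refine dense_iff_inter_open.mpr fun U hU hUne => ?_
      obtain ⟨p, ⟨hpU, hpo⟩, hpt⟩ := hd.inter_open_nonempty (U ×ˢ o) (hU.prod (hB.isOpen ho))
        (hUne.prod (nonempty_iff_ne_empty.mpr (ne_of_mem_of_not_mem ho hBne)))
      exact ⟨p.1, hpU, p, ⟨hpt, mem_univ _, hpo⟩, rfl⟩
  filter_upwards [(eventually_countable_ball hBc).mpr hmeets] with x hx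
  exact hB.dense_iff.mpr fun o ho _ => hx o ho

theorem IsMeagre.eventually_residual_isMeagre_section {S : Set (X × Y)} (hS : IsMeagre S) :
    ∀ᶠ x in residual X, IsMeagre {y | (x, y) ∈ S} := by
  obtain ⟨F, hFo, hFd, hFc, hFS⟩ := mem_residual_iff.mp hS
  filter_upwards [(eventually_countable_ball hFc).mpr fun t ht =>
    (hFd t ht).eventually_residual_dense_section (hFo t ht)] with x hx
  have hsections : (⋂ t ∈ F, {y | (x, y) ∈ t}) ∈ residual Y :=
    (countable_bInter_mem hFc).mpr fun t ht =>
      residual_of_dense_open ((hFo t ht).preimage (Continuous.prodMk_right x)) (hx t ht)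
  refine mem_of_superset hsections fun y hy => hFS ?_
  simpa using hy

end KuratowskiUlam

theorem BaireMeasurableSet.exists_corners_mem {G : Type*} [AddGroup G] [TopologicalSpace G]
    [IsTopologicalAddGroup G] [SecondCountableTopology G] [BaireSpace (G × G)]
    {A : Set (G × G)} (hA : BaireMeasurableSet A) (hA' : ¬IsMeagre A) :
    ∃ x₁ y₁ : G, (x₁, y₁) ∈ A ∧ ∃ U : Set G, IsOpen U ∧ (0 : G) ∈ U ∧
      ∀ᶠ q in residual (G × G), q ∈ U ×ˢ U →
        (x₁ + q.1, y₁ + q.2) ∈ A ∧ (x₁ + q.1, y₁) ∈ A ∧ (x₁, y₁ + q.2) ∈ A := by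
  obtain ⟨u, hu, hAu⟩ := hA.residualEq_isOpen
  have hS : IsMeagre (u \ A) := by
    filter_upwards [hAu] with p hp ⟨hpu, hpA⟩ using hpA ((eq_iff_iff.mp hp).mpr hpu)
  have hune : u.Nonempty := by
    by_contra! hu0
    subst hu0
    exact hA' (by filter_upwards [hAu] with p hp hpA using (eq_iff_iff.mp hp).mp hpA)
  have hrows := hS.eventually_residual_isMeagre_section
  have hcols : ∀ᶠ y in residual G, IsMeagre {x | (x, y) ∈ u \ A} :=
    (hS.preimage_of_isOpenMap continuous_swap
      (Homeomorph.prodComm G G).isOpenMap).eventually_residual_isMeagre_section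
  obtain ⟨⟨x₁, y₁⟩, hpu, ⟨hpS, hx₁⟩, hy₁⟩ := (dense_of_mem_residual (inter_mem (inter_mem hS
    (tendsto_residual_of_isOpenMap continuous_fst isOpenMap_fst hrows))
    (tendsto_residual_of_isOpenMap continuous_snd isOpenMap_snd hcols))).inter_open_nonempty
    u hu hune
  have hp : (x₁, y₁) ∈ A := by_contra fun h => hpS ⟨hpu, h⟩
  have hu' : (fun q : G × G => (x₁, y₁) + q) ⁻¹' u ∈ 𝓝 (0 : G × G) :=
    (hu.preimage (continuous_const.add continuous_id)).mem_nhds (by simpa using hpu)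
  rw [show (0 : G × G) = (0, 0) from rfl, nhds_prod_eq,
    ((nhds_basis_opens (0 : G)).prod_self).mem_iff] at hu'
  obtain ⟨U, ⟨hU0, hUo⟩, hUu⟩ := hu'
  refine ⟨x₁, y₁, hp, U, hUo, hU0, ?_⟩
  have htranslate : ∀ᶠ q in residual (G × G), (x₁ + q.1, y₁ + q.2) ∉ u \ A :=
    tendsto_residual_of_isOpenMap (continuous_const.add continuous_id)
      (Homeomorph.addLeft (x₁, y₁)).isOpenMap hS
  have hrow : ∀ᶠ q in residual (G × G), (x₁ + q.1, y₁) ∉ u \ A :=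
    tendsto_residual_of_isOpenMap (continuous_const.add continuous_fst)
      ((Homeomorph.addLeft x₁).isOpenMap.comp isOpenMap_fst) hy₁
  have hcol : ∀ᶠ q in residual (G × G), (x₁, y₁ + q.2) ∉ u \ A :=
    tendsto_residual_of_isOpenMap (continuous_const.add continuous_snd)
      ((Homeomorph.addLeft y₁).isOpenMap.comp isOpenMap_snd) hx₁
  have hmem : ∀ a ∈ U, ∀ b ∈ U, (x₁ + a, y₁ + b) ∈ u := fun a ha b hb =>
    hUu (show (a, b) ∈ U ×ˢ U from ⟨ha, hb⟩)
  filter_upwards [htranslate, hrow, hcol] with q h₁ h₂ h₃ ⟨hq₁, hq₂⟩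
  simp only [Set.mem_sdiff, not_and, not_not] at h₁ h₂ h₃
  exact ⟨h₁ (hmem _ hq₁ _ hq₂), h₂ (by simpa using hmem _ hq₁ _ hU0),
    h₃ (by simpa using hmem _ hU0 _ hq₂)⟩

theorem Continuous.mapsTo_closure_of_eventually_residual {X Y : Type*} [TopologicalSpace X]
    [BaireSpace X] [TopologicalSpace Y] {φ : X → Y} (hφ : Continuous φ) {V : Set X}
    (hV : IsOpen V) {C : Set Y} (h : ∀ᶠ x in residual X, x ∈ V → φ x ∈ C) :
    MapsTo φ V (closure C) := by
  have hgood : MapsTo φ (V ∩ {x | x ∈ V → φ x ∈ C}) C := fun x hx => hx.2 hx.1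
  exact (hgood.closure hφ).mono_left
    ((dense_of_mem_residual h).open_subset_closure_inter hV)

theorem exists_not_isMeagre_preimage_singleton {X Q : Type*} [TopologicalSpace X] [BaireSpace X]
    [Nonempty X] [Countable Q] (c : X → Q) : ∃ k, ¬IsMeagre (c ⁻¹' {k}) := by
  by_contra! h
  refine not_isMeagre_of_isOpen (X := X) isOpen_univ univ_nonempty ?_
  simpa only [← preimage_iUnion, iUnion_of_singleton, preimage_univ] using isMeagre_iUnion h

@[to_additive]
theorem Subgroup.countable_quotient_of_isOpen {M : Type*} [Group M] [TopologicalSpace M]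
    [IsTopologicalGroup M] [SeparableSpace M] {N : Subgroup M} (hN : IsOpen (N : Set M)) :
    Countable (M ⧸ N) :=
  have := QuotientGroup.discreteTopology hN
  have := QuotientGroup.isQuotientMap_mk N |>.separableSpace
  separableSpace_iff_countable.mp this

theorem QuotientAddGroup.sub_sub_add_mem_of_mk_eq {M : Type*} [AddCommGroup M] {N : AddSubgroup M}
    {a b c d : M} (hab : (a : M ⧸ N) = b) (hcd : (c : M ⧸ N) = d) : a - b - c + d ∈ N := by
  rw [QuotientAddGroup.eq] at hab hcd
  rw [show a - b - c + d = -c + d - (-a + b) by abel]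
  exact N.sub_mem hcd hab

def addDefect {G H : Type*} [Add G] [Sub H] (f : G → H) (x y : G) : H := f (x + y) - f x - f y

theorem addDefect_translate {G H : Type*} [AddCommGroup G] [AddCommGroup H] (f : G → H)
    (x₁ y₁ a b : G) :
    addDefect (fun z => f (x₁ + y₁ + z) - f (x₁ + y₁)) a b =
      addDefect f (x₁ + a) (y₁ + b) - addDefect f (x₁ + a) y₁ - addDefect f x₁ (y₁ + b) +
        addDefect f x₁ y₁ := by
  simp only [addDefect]
  rw [show x₁ + a + (y₁ + b) = x₁ + y₁ + (a + b) by abel, show x₁ + a + y₁ = x₁ + y₁ + a by abel,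
    show x₁ + (y₁ + b) = x₁ + y₁ + b by abel]
  abel

theorem statement7_general
    {G H : Type*}
    [TopologicalSpace G] [AddCommGroup G] [IsTopologicalAddGroup G] [PolishSpace G]
    -- `G` is non-Archimedean:
    (hGna : ∀ U ∈ nhds (0 : G), ∃ S : AddSubgroup G, IsOpen (S : Set G) ∧ (S : Set G) ⊆ U)
    [TopologicalSpace H] [AddCommGroup H] [IsTopologicalAddGroup H]
    [MeasurableSpace H] [BorelSpace H]
    -- `M` is a non-Archimedean Polishable subgroup of `H`, with Polish group topology `τ`:
    (M : AddSubgroup H) (τ : TopologicalSpace M)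
    (hPol : @PolishSpace M τ) (hTG : @IsTopologicalAddGroup M τ _)
    (hBorel : ∀ U : Set M, τ.IsOpen U → MeasurableSet (Subtype.val '' U))
    (f : G → H) (hf : Continuous f)
    (hcoc : ∀ x y : G, f (x + y) - f x - f y ∈ M)
    -- `M₁` is an open subgroup of `M` with `M₁ = cl_H(M₁) ∩ M`:
    (M₁ : AddSubgroup H)
    (hM₁open : τ.IsOpen {m : M | (m : H) ∈ M₁})
    (hM₁cl : (M₁ : Set H) = closure (M₁ : Set H) ∩ (M : Set H)) :
    ∃ (x₁ y₁ : G) (G₁ : AddSubgroup G), IsOpen (G₁ : Set G) ∧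
      ∀ x ∈ G₁, ∀ y ∈ G₁,
        (f (x₁ + y₁ + (x + y)) - f (x₁ + y₁)) - (f (x₁ + y₁ + x) - f (x₁ + y₁)) -
          (f (x₁ + y₁ + y) - f (x₁ + y₁)) ∈ M₁ := by
  let w : G × G → M := fun p => ⟨addDefect f p.1 p.2, hcoc p.1 p.2⟩
  have hw : Continuous fun p => (w p : H) := by
    simp only [w, addDefect]
    fun_prop
  let N := M₁.addSubgroupOf M
  have hN : IsOpen (N : Set M) := hM₁open
  have := AddSubgroup.countable_quotient_of_isOpen hN
  obtain ⟨k, hk⟩ := exists_not_isMeagre_preimage_singleton fun p => (w p : M ⧸ N)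
  have hfiber : BaireMeasurableSet (w ⁻¹' (((↑) : M → M ⧸ N) ⁻¹' {k})) := by
    borelize (G × G)
    have := QuotientAddGroup.discreteTopology hN
    rw [← Subtype.val_injective.preimage_image (((↑) : M → M ⧸ N) ⁻¹' {k}), ← preimage_comp]
    exact (hw.measurable (hBorel _ ((isOpen_discrete {k}).preimage
      QuotientAddGroup.continuous_mk))).baireMeasurableSet
  obtain ⟨x₁, y₁, h₀, U, hUo, hU0, hU⟩ := hfiber.exists_corners_mem hk
  obtain ⟨G₁, hG₁o, hG₁U⟩ := hGna U (hUo.mem_nhds hU0)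
  refine ⟨x₁, y₁, G₁, hG₁o, fun x hx y hy => ?_⟩
  let g : G → H := fun z => f (x₁ + y₁ + z) - f (x₁ + y₁)
  have hg : ∀ q : G × G, addDefect g q.1 q.2 =
      ↑(w (x₁ + q.1, y₁ + q.2) - w (x₁ + q.1, y₁) - w (x₁, y₁ + q.2) + w (x₁, y₁)) := fun q => by
    simp [g, w, addDefect_translate]
  have hclosure : MapsTo (fun q : G × G => addDefect g q.1 q.2) (U ×ˢ U) (closure M₁) := by
    refine Continuous.mapsTo_closure_of_eventually_residual ?_ (hUo.prod hUo) ?_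
    · simp only [g, addDefect]
      fun_prop
    · filter_upwards [hU] with q hq hqU
      obtain ⟨h₁, h₂, h₃⟩ := hq hqU
      rw [hg]
      exact AddSubgroup.mem_addSubgroupOf.mp
        (QuotientAddGroup.sub_sub_add_mem_of_mk_eq (h₁.trans h₂.symm) (h₃.trans h₀.symm))
  show addDefect g x y ∈ (M₁ : Set H)
  rw [hM₁cl]
  exact ⟨hclosure (show (x, y) ∈ U ×ˢ U from ⟨hG₁U hx, hG₁U hy⟩), hg (x, y) ▸ SetLike.coe_mem _⟩

/-- One-step improvement of a continuous lift of a homomorphism into a quotient by a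
non-Archimedean Polishable subgroup (Lemma 7.1 of the paper). -/
theorem statement7
    {G H : Type*}
    [TopologicalSpace G] [AddCommGroup G] [IsTopologicalAddGroup G] [PolishSpace G]
    -- `G` is non-Archimedean:
    (hGna : ∀ U ∈ nhds (0 : G), ∃ S : AddSubgroup G, IsOpen (S : Set G) ∧ (S : Set G) ⊆ U)
    [TopologicalSpace H] [AddCommGroup H] [IsTopologicalAddGroup H] [PolishSpace H]
    [MeasurableSpace H] [BorelSpace H]
    -- `M` is a non-Archimedean Polishable subgroup of `H`, with Polish group topology `τ`:
    (M : AddSubgroup H) (τ : TopologicalSpace M)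
    (hPol : @PolishSpace M τ) (hTG : @IsTopologicalAddGroup M τ _)
    (hBorel : ∀ U : Set M, τ.IsOpen U → MeasurableSet (Subtype.val '' U))
    (hna : ∀ U ∈ @nhds M τ 0, ∃ S : AddSubgroup M, τ.IsOpen (S : Set M) ∧ (S : Set M) ⊆ U)
    (f : G → H) (hf : Continuous f)
    (hcoc : ∀ x y : G, f (x + y) - f x - f y ∈ M)
    -- `M₁` is an open subgroup of `M` with `M₁ = cl_H(M₁) ∩ M`:
    (M₁ : AddSubgroup H) (hM₁le : M₁ ≤ M)
    (hM₁open : τ.IsOpen {m : M | (m : H) ∈ M₁})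
    (hM₁cl : (M₁ : Set H) = closure (M₁ : Set H) ∩ (M : Set H)) :
    ∃ (x₁ y₁ : G) (G₁ : AddSubgroup G), IsOpen (G₁ : Set G) ∧
      ∀ x ∈ G₁, ∀ y ∈ G₁,
        (f (x₁ + y₁ + (x + y)) - f (x₁ + y₁)) - (f (x₁ + y₁ + x) - f (x₁ + y₁)) -
          (f (x₁ + y₁ + y) - f (x₁ + y₁)) ∈ M₁ :=
  statement7_general hGna M τ hPol hTG hBorel f hf hcoc M₁ hM₁open hM₁cl
end

section
/- Let G be a Polish group and A an abelian Polish group, and suppose G acts on A by automorphisms of the abstract group A (i.e., there is a group action of G on A such that for each g ∈ G the map a ↦ g·a is an additive group automorphism of A). If the action map G × A → A, (g, a) ↦ g·a, is Borel measurable, then it is continuous. -/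
/-!
Each map `a ↦ g • a` is a Borel additive homomorphism, hence continuous by Pettis' theorem.
A Borel map is continuous on a comeagre set `M`. Given countably many points `s` of `G × A`,
Baire category yields `(h, b)` such that both `(h * s.1, s.2 + b)` and `(h * s.1, b)` lie in
`M` for every `s`; since `(h * c) • (d + b) - (h * c) • b = h • c • d`, the action is
continuous on every countable set, hence sequentially continuous.
-/

open Filter Topology Set
open scoped Pointwise

theorem Filter.Eventually.exists_mem_of_isOpen {X : Type*} [TopologicalSpace X] [BaireSpace X]
    {p : X → Prop} (hp : ∀ᶠ x in residual X, p x) {U : Set X} (hU : IsOpen U)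
    (hne : U.Nonempty) : ∃ x ∈ U, p x :=
  (dense_of_mem_residual hp).inter_open_nonempty U hU hne

theorem BaireMeasurableSet.sub_self_mem_nhds_zero {B : Type*} [AddGroup B] [TopologicalSpace B]
    [IsTopologicalAddGroup B] [BaireSpace B] {S : Set B} (hS : BaireMeasurableSet S)
    (hS' : ¬IsMeagre S) : S - S ∈ 𝓝 0 := by
  obtain ⟨U, hU, hSU⟩ := hS.residualEq_isOpen
  obtain ⟨x₀, hx₀⟩ : U.Nonempty := by
    rw [nonempty_iff_ne_empty]
    rintro rfl
    exact hS' (eventuallyEq_empty.1 hSU)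
  have hSU' := eventuallyEq_set.1 hSU
  -- For `t ∈ U - x₀`, the open set `U ∩ (t + U)` is nonempty, and a generic point `s` of it
  -- has both `s` and `-t + s` in `S`.
  refine mem_of_superset ((hU.preimage (continuous_add_const x₀)).mem_nhds (by simpa using hx₀))
    fun t ht => ?_
  have hshift : ∀ᶠ x in residual B, (-t + x ∈ S ↔ -t + x ∈ U) :=
    (tendsto_residual_of_isOpenMap (continuous_const_add (-t)) (isOpenMap_add_left (-t))).eventually
      hSU'
  obtain ⟨s, ⟨hsU, hsU'⟩, hs, hs'⟩ := (hSU'.and hshift).exists_mem_of_isOpen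
    (hU.inter (hU.preimage (continuous_const_add (-t)))) ⟨t + x₀, ht, by simpa using hx₀⟩
  exact ⟨s, hs.2 hsU, -t + s, hs'.2 hsU', by simp [sub_eq_add_neg]⟩

theorem AddMonoidHom.continuous_of_measurable {B C : Type*}
    [AddGroup B] [TopologicalSpace B] [IsTopologicalAddGroup B] [BaireSpace B]
    [MeasurableSpace B] [BorelSpace B]
    [AddGroup C] [TopologicalSpace C] [IsTopologicalAddGroup C]
    [TopologicalSpace.SeparableSpace C] [MeasurableSpace C] [BorelSpace C]
    (φ : B →+ C) (hφ : Measurable φ) : Continuous φ := by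
  refine continuous_of_continuousAt_zero φ fun W hW => ?_
  rw [map_zero] at hW
  obtain ⟨V, hV, hVW⟩ := exists_nhds_half_neg hW
  obtain ⟨D, hD, hDd⟩ := TopologicalSpace.exists_countable_dense C
  let S : C → Set B := fun d => φ ⁻¹' ((· - d) ⁻¹' interior V)
  have hcover : ⋃ d ∈ D, S d = univ := by
    refine eq_univ_of_forall fun b => mem_iUnion₂.2 ?_
    have : (φ b - ·) ⁻¹' interior V ∈ 𝓝 (φ b) :=
      (continuous_sub_left (φ b)).continuousAt.preimage_mem_nhds
        (by simpa using interior_mem_nhds.2 hV)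
    obtain ⟨d, hd, hdD⟩ := mem_closure_iff_nhds.1 (hDd (φ b)) _ this
    exact ⟨d, hdD, hd⟩
  obtain ⟨d, -, hd⟩ : ∃ d ∈ D, ¬IsMeagre (S d) := by
    by_contra! h
    exact not_isMeagre_of_mem_residual univ_mem (hcover ▸ isMeagre_biUnion hD h)
  have hSd : MeasurableSet (S d) :=
    hφ (isOpen_interior.preimage (continuous_sub_right d)).measurableSet
  refine mem_map.2 <| mem_of_superset (hSd.baireMeasurableSet.sub_self_mem_nhds_zero hd) ?_
  rintro _ ⟨a, ha, b, hb, rfl⟩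
  simpa [sub_sub_sub_cancel_right] using hVW _ (interior_subset ha) _ (interior_subset hb)

theorem Measurable.exists_mem_residual_continuousOn {X Y : Type*} [TopologicalSpace X]
    [MeasurableSpace X] [BorelSpace X] [TopologicalSpace Y] [MeasurableSpace Y] [BorelSpace Y]
    [SecondCountableTopology Y] {f : X → Y} (hf : Measurable f) :
    ∃ M ∈ residual X, ContinuousOn f M := by
  obtain ⟨𝓑, h𝓑c, -, h𝓑⟩ := TopologicalSpace.exists_countable_basis Y
  choose! U hU hfU using fun W (hW : W ∈ 𝓑) =>
    (hf (h𝓑.isOpen hW).measurableSet).residualEq_isOpen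
  refine ⟨{x | ∀ W ∈ 𝓑, f x ∈ W ↔ x ∈ U W},
    (eventually_countable_ball h𝓑c).2 fun W hW => eventuallyEq_set.1 (hfU W hW),
    fun x hx N hN => ?_⟩
  obtain ⟨W, hW, hxW, hWN⟩ := h𝓑.mem_nhds_iff.1 hN
  rw [mem_map]
  filter_upwards [mem_nhdsWithin_of_mem_nhds ((hU W hW).mem_nhds ((hx W hW).1 hxW)),
    self_mem_nhdsWithin] with y hyU hyM
  exact hWN ((hyM W hW).2 hyU)

theorem continuous_of_forall_countable_continuousOn {X Y : Type*} [TopologicalSpace X]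
    [SequentialSpace X] [TopologicalSpace Y] {f : X → Y}
    (hf : ∀ S : Set X, S.Countable → ContinuousOn f S) : Continuous f := by
  refine SeqContinuous.continuous fun u x hu => ?_
  have hS : (insert x (range u)).Countable := (countable_range u).insert x
  exact ((hf _ hS).continuousWithinAt (mem_insert x _)).tendsto.comp
    (tendsto_nhdsWithin_iff.2 ⟨hu, .of_forall fun n => mem_insert_of_mem x (mem_range_self n)⟩)

theorem continuous_smul_of_continuousOn_residual {G A : Type*}
    [Group G] [TopologicalSpace G] [ContinuousMul G]
    [AddGroup A] [TopologicalSpace A] [IsTopologicalAddGroup A] [DistribMulAction G A]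
    [BaireSpace (G × A)] [SequentialSpace (G × A)]
    (hcont : ∀ g : G, Continuous fun a : A => g • a)
    {M : Set (G × A)} (hM : M ∈ residual (G × A))
    (hF : ContinuousOn (fun p : G × A => p.1 • p.2) M) :
    Continuous fun p : G × A => p.1 • p.2 := by
  refine continuous_of_forall_countable_continuousOn fun S hS => ?_
  have htranslate (s : G × A) : ∀ᶠ z in residual (G × A), (z.1 * s.1, s.2 + z.2) ∈ M :=
    let τ := (Homeomorph.mulRight s.1).prodCongr (Homeomorph.addLeft s.2)
    (tendsto_residual_of_isOpenMap τ.continuous τ.isOpenMap).eventually hM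
  obtain ⟨⟨h, b⟩, hhb⟩ : ∃ z : G × A, ∀ s ∈ S,
      (z.1 * s.1, s.2 + z.2) ∈ M ∧ (z.1 * s.1, z.2) ∈ M :=
    (dense_of_mem_residual ((eventually_countable_ball hS).2 fun s _ =>
      (htranslate s).and ((htranslate (s.1, 0)).mono fun z hz => by simpa using hz))).nonempty
  have hdiff : ContinuousOn (fun s : G × A => (h * s.1) • (s.2 + b) - (h * s.1) • b) S :=
    (hF.comp (f := fun s => (h * s.1, s.2 + b)) (by fun_prop) fun s hs => (hhb s hs).1).sub
      (hF.comp (f := fun s : G × A => (h * s.1, b)) (by fun_prop) fun s hs => (hhb s hs).2)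
  have hsmul : (fun p : G × A => p.1 • p.2) =
      fun s => h⁻¹ • ((h * s.1) • (s.2 + b) - (h * s.1) • b) := by
    ext s
    simp [smul_add, mul_smul]
  rw [hsmul]
  exact (hcont h⁻¹).comp_continuousOn hdiff

/-- A Borel-measurable action of a Polish group `G` by additive automorphisms on an abelian
Polish group `A` is continuous. -/
theorem statement16
    {G A : Type*}
    [Group G] [TopologicalSpace G] [IsTopologicalGroup G] [PolishSpace G]
    [MeasurableSpace G] [BorelSpace G]
    [AddCommGroup A] [TopologicalSpace A] [IsTopologicalAddGroup A] [PolishSpace A]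
    [MeasurableSpace A] [BorelSpace A]
    [DistribMulAction G A]
    (hmeas : Measurable fun p : G × A => p.1 • p.2) :
    Continuous fun p : G × A => p.1 • p.2 := by
  have hcont (g : G) : Continuous fun a : A => g • a :=
    (DistribSMul.toAddMonoidHom A g).continuous_of_measurable
      (hmeas.comp measurable_prodMk_left)
  obtain ⟨M, hM, hF⟩ := hmeas.exists_mem_residual_continuousOn
  exact continuous_smul_of_continuousOn_residual hcont hM hF
end

section
/- Let K be a Polish topological field (in particular, any separable complete non-Archimedean valued field), let X be a Polish topological K-vector space, and let N ⊆ X be a K-linear subspace equipped with a Polish topological K-vector space topology τ whose open sets are Borel in X and which refines the subspace topology (so N is a Polishable subspace of X). Define s₁ = ⋂_V ⋃_{w∈N} cl_X(w + V), where V ranges over the τ-neighborhoods of 0 in N and cl_X denotes closure in X. Then s₁ is a K-linear subspace of X: for every λ ∈ K and x ∈ s₁ one has λ·x ∈ s₁. -/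
open Topology Pointwise

section SoleckiOne

variable {R X N : Type*} [Semiring R]
  [AddCommMonoid X] [Module R X] [TopologicalSpace X] [ContinuousConstSMul R X]
  [AddCommMonoid N] [Module R N] [TopologicalSpace N] [ContinuousConstSMul R N]

def soleckiOne (ι : N →ₗ[R] X) : Set X :=
  ⋂ V ∈ {V : Set N | V ∈ 𝓝 (0 : N)}, ⋃ w : N, closure ((fun v : N => ι w + ι v) '' V)

theorem smul_mem_soleckiOne (ι : N →ₗ[R] X) (c : R) {x : X} (hx : x ∈ soleckiOne ι) :
    c • x ∈ soleckiOne ι := by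
  simp only [soleckiOne, Set.mem_iInter, Set.mem_iUnion, Set.mem_ofPred_eq] at hx ⊢
  intro V hV
  -- Pulling `V` back along `c • ·`, instead of scaling it by `c⁻¹`, also covers `c = 0`.
  have hpre : (c • ·) ⁻¹' V ∈ 𝓝 (0 : N) :=
    (continuous_const_smul c).tendsto' 0 0 (smul_zero c) hV
  obtain ⟨w, hw⟩ := hx _ hpre
  refine ⟨c • w, closure_mono ?_ (smul_closure_subset c _ (Set.smul_mem_smul_set hw))⟩
  rintro _ ⟨_, ⟨v, hv, rfl⟩, rfl⟩
  exact ⟨c • v, hv, by simp only [map_smul, smul_add]⟩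

end SoleckiOne

theorem statement18_general
    {K X : Type*}
    [Field K] [TopologicalSpace K]
    [AddCommGroup X] [Module K X] [TopologicalSpace X]
    [ContinuousSMul K X]
    -- `N` is a Polishable subspace of `X`, with Polish vector space topology `τ` refining the
    -- subspace topology and whose open sets are Borel in `X`:
    (N : Submodule K X) (τ : TopologicalSpace N)
    (hSMul : @ContinuousSMul K N _ _ τ)
    (lam : K) (x : X)
    (hx : x ∈ ⋂ V ∈ {V : Set N | V ∈ @nhds N τ 0},
      ⋃ w : N, closure ((fun v : N => (w : X) + (v : X)) '' V)) :
    lam • x ∈ ⋂ V ∈ {V : Set N | V ∈ @nhds N τ 0},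
      ⋃ w : N, closure ((fun v : N => (w : X) + (v : X)) '' V) := by
  let := τ
  exact smul_mem_soleckiOne N.subtype lam hx

/-- The first Solecki subgroup `s₁` of a vector space with a Polish cover `X/N` is closed under
scalar multiplication, and hence is a linear subspace. -/
theorem statement18
    {K X : Type*}
    [Field K] [TopologicalSpace K] [IsTopologicalRing K] [PolishSpace K]
    [AddCommGroup X] [Module K X] [TopologicalSpace X] [IsTopologicalAddGroup X]
    [ContinuousSMul K X] [PolishSpace X]
    [MeasurableSpace X] [BorelSpace X]
    -- `N` is a Polishable subspace of `X`, with Polish vector space topology `τ` refining the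
    -- subspace topology and whose open sets are Borel in `X`:
    (N : Submodule K X) (τ : TopologicalSpace N)
    (hPol : @PolishSpace N τ) (hTG : @IsTopologicalAddGroup N τ _)
    (hSMul : @ContinuousSMul K N _ _ τ)
    (hBorel : ∀ U : Set N, τ.IsOpen U → MeasurableSet (Subtype.val '' U))
    (hfiner : τ ≤ instTopologicalSpaceSubtype)
    (lam : K) (x : X)
    (hx : x ∈ ⋂ V ∈ {V : Set N | V ∈ @nhds N τ 0},
      ⋃ w : N, closure ((fun v : N => (w : X) + (v : X)) '' V)) :
    lam • x ∈ ⋂ V ∈ {V : Set N | V ∈ @nhds N τ 0},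
      ⋃ w : N, closure ((fun v : N => (w : X) + (v : X)) '' V) :=
  statement18_general N τ hSMul lam x hx
end
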